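/- If ρ(m) = 2^{−m} (the Dirichlet-process case), the expected KL divergence E_M = Σ_{m=1}^M {ψ₀(2α/2^m) − ψ₀(α/2^m) − log 2} diverges to +∞ as M → ∞, for every α > 0. -/

import Mathlib

/-!
With `x_m = α / 2^m` the summands telescope, `ψ₀(2 x_m) - ψ₀(x_m) = ψ₀(x_{m-1}) - ψ₀(x_m)`, so
`E_M = ψ₀(α) - ψ₀(α / 2^M) - M log 2`. The recurrence `ψ₀(x) = ψ₀(x + 1) - 1/x` and the
monotonicity of `ψ₀` (convexity of `log Γ`) give `-ψ₀(α / 2^M) ≥ 2^M / α - ψ₀(α + 1)`, and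
`2^M / α` outgrows `M log 2`.
-/

open scoped BigOperators
open Filter

/-- The digamma function `ψ₀ = (log ∘ Γ)'`. -/
noncomputable def digamma (x : ℝ) : ℝ := deriv (fun y => Real.log (Real.Gamma y)) x

open Asymptotics

lemma differentiableAt_log_Gamma {x : ℝ} (hx : 0 < x) :
    DifferentiableAt ℝ (fun y => Real.log (Real.Gamma y)) x := by
  refine (Real.differentiableAt_Gamma ?_).log (Real.Gamma_ne_zero ?_) <;>
    exact fun m => ((neg_nonpos.mpr (Nat.cast_nonneg m)).trans_lt hx).ne'

lemma digamma_add_one {x : ℝ} (hx : 0 < x) : digamma (x + 1) = digamma x + x⁻¹ := by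
  unfold digamma
  rw [← deriv_comp_add_const, ← Real.deriv_log,
    ← deriv_fun_add (differentiableAt_log_Gamma hx) (Real.differentiableAt_log hx.ne')]
  apply EventuallyEq.deriv_eq
  filter_upwards [eventually_gt_nhds hx] with y hy
  rw [Real.Gamma_add_one hy.ne', Real.log_mul hy.ne' (Real.Gamma_pos_of_pos hy).ne', add_comm]

lemma digamma_monotoneOn : MonotoneOn digamma (Set.Ioi 0) :=
  Real.convexOn_log_Gamma.monotoneOn_deriv fun _ hx => differentiableAt_log_Gamma hx

lemma digamma_le_digamma_add_one_sub_inv {x y : ℝ} (hx : 0 < x) (hxy : x ≤ y) :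
    digamma x ≤ digamma (y + 1) - x⁻¹ := by
  have hmono : digamma (x + 1) ≤ digamma (y + 1) :=
    digamma_monotoneOn (by simp only [Set.mem_Ioi]; linarith)
      (by simp only [Set.mem_Ioi]; linarith) (by linarith)
  linarith [digamma_add_one hx]

lemma sum_Icc_digamma_two_mul_sub (α : ℝ) (M : ℕ) :
    ∑ m ∈ Finset.Icc 1 M, (digamma (2 * (α / 2 ^ m)) - digamma (α / 2 ^ m) - Real.log 2) =
      digamma α - digamma (α / 2 ^ M) - M * Real.log 2 := by
  induction M with
  | zero => simp
  | succ M ih =>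
    have htwo : 2 * (α / 2 ^ (M + 1)) = α / 2 ^ M := by rw [pow_succ]; field_simp
    rw [Finset.sum_Icc_succ_top (by omega), ih, htwo]
    push_cast
    ring

lemma tendsto_const_mul_pow_sub_mul_atTop {c r : ℝ} (hc : 0 < c) (hr : 1 < r) (b : ℝ) :
    Tendsto (fun n : ℕ => c * r ^ n - b * n) atTop atTop := by
  have hlittle : (fun n : ℕ => -(b * n)) =o[atTop] fun n => c * r ^ n :=
    (((isLittleO_coe_const_pow_of_one_lt hr).const_mul_left b).const_mul_right hc.ne').neg_left
  have hequiv : (fun n : ℕ => c * r ^ n - b * n) ~[atTop] fun n => c * r ^ n :=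
    IsLittleO.isEquivalent (by simpa [Pi.sub_def] using hlittle)
  exact hequiv.symm.tendsto_atTop
    ((tendsto_pow_atTop_atTop_of_one_lt hr).const_mul_atTop hc)

/-- In the Dirichlet-process case `ρ(m) = 2^{−m}`, the expected KL
divergence `E_M = ∑_{m=1}^M {ψ₀(2α/2^m) − ψ₀(α/2^m) − log 2}` diverges to `+∞`
as `M → ∞`, for every `α > 0`. -/
theorem polyaTree_expected_kl_dirichlet_diverges (α : ℝ) (hα : 0 < α) :
    Tendsto (fun M : ℕ => ∑ m ∈ Finset.Icc 1 M,
      (digamma (2 * (α / 2 ^ m)) - digamma (α / 2 ^ m) - Real.log 2))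
      atTop atTop := by
  have hlower : ∀ M : ℕ, digamma α - digamma (α + 1) + (α⁻¹ * 2 ^ M - Real.log 2 * M) ≤
      ∑ m ∈ Finset.Icc 1 M, (digamma (2 * (α / 2 ^ m)) - digamma (α / 2 ^ m) - Real.log 2) := by
    intro M
    have hle : α / 2 ^ M ≤ α := div_le_self hα.le (one_le_pow₀ one_le_two)
    have hψ := digamma_le_digamma_add_one_sub_inv (by positivity) hle
    rw [inv_div, div_eq_inv_mul (2 ^ M)] at hψ
    rw [sum_Icc_digamma_two_mul_sub]
    linarith
  exact tendsto_atTop_mono hlower <| tendsto_atTop_add_const_left _ _ <|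
    tendsto_const_mul_pow_sub_mul_atTop (inv_pos.mpr hα) one_lt_two _
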